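/- If ν is a shift-invariant Gibbs measure for a shift-invariant Gibbs structure over a countable group G, then the shift action of G on (A^G, ν) is essentially free: for every g ≠ e, the set {ω : gω = ω} is ν-null. -/

import Mathlib

/-!
Fix `g ≠ 1` and a site `h` with `h * g ≠ h`. Resampling the single coordinate `h` with the Gibbs
kernel leaves every event not involving `h` unchanged, while the new value `x h` equals the
untouched value `x (h * g)` with probability at most `c < 1`, uniformly in the boundary condition:
the energy of one site is bounded by `#D * sup |φ|`, so every letter has conditional probability at
most `(1 + exp (-2 * #D * sup |φ|))⁻¹`. Since `G` is infinite there are `n` sites `h₁, …, hₙ`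
with no `hᵢ * g` among them; conditioning on one site at a time gives
`ν {x | ∀ i, x (hᵢ * g) = x hᵢ} ≤ cⁿ`, and this event contains every fixed point of `g`.
-/

open MeasureTheory Real Filter Topology
open scoped ENNReal

noncomputable section
open scoped Classical

namespace ShiftGibbs

variable {G : Type*} [Group G] {A : Type*} [Fintype A] [Nonempty A]
  [MeasurableSpace A] [MeasurableSingletonClass A]

/-- The shift action of `G` on `A^G`: `(g • x)(h) = x (h * g)`. -/
def shift (g : G) (x : G → A) : G → A := fun h => x (h * g)

/-- The energy in the window `Λ` for the shift-invariant potential `φ` with base window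
`D`: `∑_{g : Dg ∩ Λ ≠ ∅} φ (g • x)`. -/
def energy (φ : (G → A) → ℝ) (D : Finset G) (Λ : Finset G) (x : G → A) : ℝ :=
  ∑ᶠ g ∈ {g : G | ∃ d ∈ D, d * g ∈ Λ}, φ (shift g x)

/-- Replace the coordinates of `η` inside `Λ` by `τ`. -/
def paste (Λ : Finset G) (η : G → A) (τ : Λ → A) : G → A :=
  fun v => if h : v ∈ Λ then τ ⟨v, h⟩ else η v

/-- The Gibbs resampling measure `π_{Λ}(η)` for the potential `φ`: resample the coordinates
in `Λ` with probabilities proportional to `exp (-∑_{Dg ∩ Λ ≠ ∅} φ (g • ·))`. -/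
def kernelMeasure (φ : (G → A) → ℝ) (D : Finset G) (Λ : Finset G) (η : G → A) :
    Measure (G → A) :=
  ∑ τ : Λ → A,
    (ENNReal.ofReal (Real.exp (-(energy φ D Λ (paste Λ η τ))) /
        ∑ τ' : Λ → A, Real.exp (-(energy φ D Λ (paste Λ η τ'))))) •
      Measure.dirac (paste Λ η τ)

/-- `ν` is a Gibbs measure for the shift-invariant Gibbs structure of `(φ, D)`. -/
def IsGibbs (φ : (G → A) → ℝ) (D : Finset G) (ν : Measure (G → A)) : Prop :=
  ∀ Λ : Finset G, ν.bind (kernelMeasure φ D Λ) = ν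

end ShiftGibbs

theorem DependsOn.finite_range {ι : Type*} {α : ι → Type*} [∀ i, Finite (α i)] {β : Type*}
    [Nonempty β] {f : (Π i, α i) → β} {s : Set ι} (hs : s.Finite) (hf : DependsOn f s) :
    (Set.range f).Finite := by
  have := hs.to_subtype
  obtain ⟨g, rfl⟩ := dependsOn_iff_exists_comp.1 hf
  exact (Set.finite_range g).subset (Set.range_comp_subset_range _ _)

theorem DependsOn.measurable {ι : Type*} {α : ι → Type*} [∀ i, MeasurableSpace (α i)]
    [∀ i, MeasurableSingletonClass (α i)] [∀ i, Countable (α i)] {β : Type*} [MeasurableSpace β]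
    [Nonempty β] {f : (Π i, α i) → β} {s : Set ι} (hs : s.Finite) (hf : DependsOn f s) :
    Measurable f := by
  have := hs.to_subtype
  obtain ⟨g, rfl⟩ := dependsOn_iff_exists_comp.1 hf
  exact (measurable_of_countable g).comp (Set.measurable_restrict s)

theorem Real.exp_neg_div_sum_exp_neg_le {ι : Type*} [Fintype ι] {E : ι → ℝ} {K : ℝ}
    (hE : ∀ i, |E i| ≤ K) {i j : ι} (hij : i ≠ j) :
    Real.exp (-E i) / ∑ k, Real.exp (-E k) ≤ (1 + Real.exp (-(2 * K)))⁻¹ := by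
  have hj : Real.exp (-E i) * Real.exp (-(2 * K)) ≤ Real.exp (-E j) := by
    rw [← Real.exp_add]
    gcongr
    linarith [(abs_le.1 (hE i)).1, (abs_le.1 (hE j)).2]
  have hsum : Real.exp (-E i) + Real.exp (-E j) ≤ ∑ k, Real.exp (-E k) := by
    rw [← Finset.sum_pair (f := fun k => Real.exp (-E k)) hij]
    exact Finset.sum_le_univ_sum_of_nonneg fun k => (Real.exp_pos _).le
  rw [div_le_iff₀ (hsum.trans_lt' (by positivity)), inv_mul_eq_div, le_div_iff₀ (by positivity)]
  linarith

theorem exists_finset_card_eq_forall_mul_ne {G : Type*} [Group G] [Infinite G] {g : G}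
    (hg : g ≠ 1) : ∀ n : ℕ, ∃ s : Finset G, s.card = n ∧ ∀ h ∈ s, ∀ h' ∈ s, h * g ≠ h'
  | 0 => ⟨∅, by simp⟩
  | n + 1 => by
    obtain ⟨s, hcard, hs⟩ := exists_finset_card_eq_forall_mul_ne hg n
    obtain ⟨h₀, hh₀⟩ :=
      Infinite.exists_notMem_finset (s ∪ s.image (· * g) ∪ s.image (· * g⁻¹))
    simp only [Finset.mem_union, Finset.mem_image, not_or, not_exists, not_and] at hh₀
    obtain ⟨⟨hh₀s, hh₀sg⟩, hh₀sg'⟩ := hh₀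
    refine ⟨insert h₀ s, by rw [Finset.card_insert_of_notMem hh₀s, hcard], ?_⟩
    simp only [Finset.mem_insert, forall_eq_or_imp]
    refine ⟨⟨fun h => hg (mul_eq_left.1 h), fun h' hh' h => hh₀sg' h' hh' ?_⟩,
      fun h hh => ⟨hh₀sg h hh, hs h hh⟩⟩
    rw [← h, mul_inv_cancel_right]

namespace ShiftGibbs

open Finset

variable {G : Type*} {A : Type*}

theorem measurable_paste [MeasurableSpace A] (Λ : Finset G) (τ : Λ → A) :
    Measurable fun η : G → A => paste Λ η τ := by
  refine measurable_pi_lambda _ fun v => ?_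
  by_cases hv : v ∈ Λ
  · simp only [paste, hv, dite_true, measurable_const]
  · simpa only [paste, hv, dite_false] using measurable_pi_apply v

theorem measurableSet_apply_eq_apply [MeasurableSpace A] [MeasurableEq A] (h₁ h₀ : G) :
    MeasurableSet {x : G → A | x h₁ = x h₀} :=
  measurableSet_eq_fun (measurable_pi_apply h₁) (measurable_pi_apply h₀)

theorem paste_singleton (h₀ : G) (η : G → A) (a : A) :
    paste {h₀} η (fun _ => a) = Function.update η h₀ a := by
  ext v
  by_cases hv : v = h₀ <;> simp [paste, hv]

theorem paste_eq_of_notMem {Λ : Finset G} (η : G → A) (τ : Λ → A) {v : G} (hv : v ∉ Λ) :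
    paste Λ η τ v = η v := dif_neg hv

variable [Group G]

theorem measurable_shift [MeasurableSpace A] (g : G) :
    Measurable (shift g : (G → A) → G → A) :=
  measurable_pi_lambda _ fun h => measurable_pi_apply (h * g)

def window (D Λ : Finset G) : Finset G := Λ.biUnion fun h => D.image fun d => d⁻¹ * h

theorem card_window_le (D Λ : Finset G) : #(window D Λ) ≤ #Λ * #D :=
  card_biUnion_le.trans <|
    (sum_le_sum fun _ _ => card_image_le).trans_eq (sum_const_nat fun _ _ => rfl)

theorem energy_eq_sum_window (φ : (G → A) → ℝ) (D Λ : Finset G) (x : G → A) :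
    energy φ D Λ x = ∑ g ∈ window D Λ, φ (shift g x) := by
  have hset : {g : G | ∃ d ∈ D, d * g ∈ Λ} = ↑(window D Λ) := by
    ext g
    simp only [Set.mem_ofPred_eq, window, coe_biUnion, Set.mem_iUnion, mem_coe, mem_image]
    constructor
    · rintro ⟨d, hd, hdg⟩
      exact ⟨d * g, hdg, d, hd, by group⟩
    · rintro ⟨h, hh, d, hd, rfl⟩
      exact ⟨d, hd, by simpa using hh⟩
  rw [energy, hset, finsum_mem_coe_finset]

theorem abs_energy_le {φ : (G → A) → ℝ} {M : ℝ} (hM : ∀ x, |φ x| ≤ M) (D Λ : Finset G)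
    (x : G → A) : |energy φ D Λ x| ≤ #Λ * #D * M := by
  rw [energy_eq_sum_window]
  calc |∑ g ∈ window D Λ, φ (shift g x)|
      ≤ ∑ g ∈ window D Λ, |φ (shift g x)| := abs_sum_le_sum_abs _ _
    _ ≤ #(window D Λ) * M := by
        simpa only [sum_const, nsmul_eq_mul] using sum_le_sum fun g _ => hM (shift g x)
    _ ≤ #Λ * #D * M := by
        gcongr
        · exact (abs_nonneg _).trans (hM x)
        · exact_mod_cast card_window_le D Λ

theorem measurable_energy [MeasurableSpace A] {φ : (G → A) → ℝ} (hφ : Measurable φ)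
    (D Λ : Finset G) : Measurable (energy φ D Λ) := by
  simp only [funext (energy_eq_sum_window φ D Λ)]
  exact Finset.measurable_sum _ fun g _ => hφ.comp (measurable_shift g)

variable [Fintype A]

def weight (φ : (G → A) → ℝ) (D Λ : Finset G) (η : G → A) (τ : Λ → A) : ℝ :=
  Real.exp (-energy φ D Λ (paste Λ η τ)) /
    ∑ τ' : Λ → A, Real.exp (-energy φ D Λ (paste Λ η τ'))

theorem weight_le (hA : 1 < Fintype.card A) {φ : (G → A) → ℝ} {M : ℝ} (hM : ∀ x, |φ x| ≤ M)
    (D : Finset G) {Λ : Finset G} (hΛ : Λ.Nonempty) (η : G → A) (τ : Λ → A) :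
    weight φ D Λ η τ ≤ (1 + Real.exp (-(2 * (#Λ * #D * M))))⁻¹ := by
  have : Nonempty Λ := hΛ.to_subtype
  have : Nontrivial A := Fintype.one_lt_card_iff_nontrivial.1 hA
  obtain ⟨τ', hτ'⟩ := exists_ne τ
  exact Real.exp_neg_div_sum_exp_neg_le (fun _ => abs_energy_le hM D Λ _) hτ'.symm

theorem exists_weight_singleton_le (hA : 1 < Fintype.card A) {φ : (G → A) → ℝ} {D : Finset G}
    (hφ : DependsOn φ (D : Set G)) :
    ∃ c < 1, ∀ (h₀ : G) (η : G → A) (τ : ({h₀} : Finset G) → A),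
      ENNReal.ofReal (weight φ D {h₀} η τ) ≤ c := by
  obtain ⟨M, hM⟩ := ((hφ.finite_range D.finite_toSet).image abs).bddAbove
  have hM' : ∀ x, |φ x| ≤ M := fun x => hM ⟨φ x, ⟨x, rfl⟩, rfl⟩
  refine ⟨ENNReal.ofReal (1 + Real.exp (-(2 * (#D * M))))⁻¹, ?_, fun h₀ η τ => ?_⟩
  · refine ENNReal.ofReal_lt_one.2 (inv_lt_one_of_one_lt₀ ?_)
    linarith [Real.exp_pos (-(2 * (#D * M)))]
  · refine ENNReal.ofReal_le_ofReal ?_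
    simpa only [card_singleton, Nat.cast_one, one_mul] using
      weight_le hA hM' D (singleton_nonempty h₀) η τ

variable [MeasurableSpace A]

theorem kernelMeasure_apply (φ : (G → A) → ℝ) (D Λ : Finset G) (η : G → A) {s : Set (G → A)}
    (hs : MeasurableSet s) :
    kernelMeasure φ D Λ η s =
      ∑ τ : Λ → A, ENNReal.ofReal (weight φ D Λ η τ) * s.indicator 1 (paste Λ η τ) := by
  simp only [kernelMeasure, Measure.finsetSum_apply, Measure.smul_apply,
    Measure.dirac_apply' _ hs, smul_eq_mul]
  rfl

theorem measurable_weight {φ : (G → A) → ℝ} (hφ : Measurable φ) (D Λ : Finset G) (τ : Λ → A) :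
    Measurable fun η => weight φ D Λ η τ := by
  have hE : ∀ τ : Λ → A, Measurable fun η => energy φ D Λ (paste Λ η τ) :=
    fun τ => (measurable_energy hφ D Λ).comp (measurable_paste Λ τ)
  unfold weight
  fun_prop

theorem measurable_kernelMeasure {φ : (G → A) → ℝ} (hφ : Measurable φ) (D Λ : Finset G) :
    Measurable (kernelMeasure φ D Λ) := by
  refine Measure.measurable_of_measurable_coe _ fun s hs => ?_
  simp only [kernelMeasure_apply φ D Λ _ hs]
  exact Finset.measurable_sum _ fun τ _ =>
    (measurable_weight hφ D Λ τ).ennreal_ofReal.mul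
      ((measurable_one.indicator hs).comp (measurable_paste Λ τ))

theorem IsGibbs.measure_eq_lintegral {φ : (G → A) → ℝ} {D : Finset G} {ν : Measure (G → A)}
    (hν : IsGibbs φ D ν) (hφ : Measurable φ) (Λ : Finset G) {s : Set (G → A)}
    (hs : MeasurableSet s) : ν s = ∫⁻ η, kernelMeasure φ D Λ η s ∂ν := by
  conv_lhs => rw [← hν Λ]
  exact Measure.bind_apply hs (measurable_kernelMeasure hφ D Λ).aemeasurable

theorem kernelMeasure_eq_zero_of_notMem (φ : (G → A) → ℝ) (D Λ : Finset G) {F : Set (G → A)}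
    (hF : MeasurableSet F) (hFΛ : DependsOn (· ∈ F) (↑Λ)ᶜ) {η : G → A} (hη : η ∉ F) :
    kernelMeasure φ D Λ η F = 0 := by
  rw [kernelMeasure_apply φ D Λ η hF]
  refine Finset.sum_eq_zero fun τ _ => ?_
  have hpaste : (paste Λ η τ ∈ F) = (η ∈ F) := hFΛ fun v hv => paste_eq_of_notMem η τ hv
  rw [Set.indicator_of_notMem (hpaste ▸ hη), mul_zero]

variable [MeasurableSingletonClass A]

theorem kernelMeasure_singleton_apply_eq (φ : (G → A) → ℝ) (D : Finset G) {h₀ h₁ : G}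
    (h₁₀ : h₁ ≠ h₀) (η : G → A) :
    kernelMeasure φ D {h₀} η {x | x h₁ = x h₀} =
      ENNReal.ofReal (weight φ D {h₀} η fun _ => η h₁) := by
  rw [kernelMeasure_apply φ D {h₀} η (measurableSet_apply_eq_apply h₁ h₀),
    ← (Equiv.funUnique _ A).symm.sum_comp]
  have hconst : ∀ a : A, uniqueElim a = fun _ : ({h₀} : Finset G) => a :=
    fun a => funext (uniqueElim_const a)
  have hind : ∀ a : A, {x : G → A | x h₁ = x h₀}.indicator 1 (Function.update η h₀ a) =
      if a = η h₁ then (1 : ℝ≥0∞) else 0 := by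
    intro a
    simp [Set.indicator_apply, Function.update_of_ne h₁₀, eq_comm]
  simp only [Equiv.funUnique_symm_apply, hconst, paste_singleton, hind, mul_ite, mul_one,
    mul_zero, Finset.sum_ite_eq', Finset.mem_univ, if_true]

theorem kernelMeasure_singleton_inter_le (φ : (G → A) → ℝ) (D : Finset G) {h₀ h₁ : G}
    (h₁₀ : h₁ ≠ h₀) {c : ℝ≥0∞}
    (hc : ∀ (η : G → A) (τ : ({h₀} : Finset G) → A), ENNReal.ofReal (weight φ D {h₀} η τ) ≤ c)
    {F : Set (G → A)} (hF : MeasurableSet F) (hFh₀ : DependsOn (· ∈ F) {h₀}ᶜ) (η : G → A) :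
    kernelMeasure φ D {h₀} η ({x | x h₁ = x h₀} ∩ F) ≤ F.indicator (fun _ => c) η := by
  by_cases hη : η ∈ F
  · rw [Set.indicator_of_mem hη]
    calc kernelMeasure φ D {h₀} η ({x | x h₁ = x h₀} ∩ F)
        ≤ kernelMeasure φ D {h₀} η {x | x h₁ = x h₀} := measure_mono Set.inter_subset_left
      _ ≤ c := (kernelMeasure_singleton_apply_eq φ D h₁₀ η).trans_le (hc η _)
  · rw [Set.indicator_of_notMem hη]
    exact (measure_mono Set.inter_subset_right).trans_eq
      (kernelMeasure_eq_zero_of_notMem φ D {h₀} hF (by rwa [coe_singleton]) hη)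

theorem IsGibbs.measure_inter_le {φ : (G → A) → ℝ} {D : Finset G} {ν : Measure (G → A)}
    (hν : IsGibbs φ D ν) (hφ : Measurable φ) {h₀ h₁ : G} (h₁₀ : h₁ ≠ h₀) {c : ℝ≥0∞}
    (hc : ∀ (η : G → A) (τ : ({h₀} : Finset G) → A), ENNReal.ofReal (weight φ D {h₀} η τ) ≤ c)
    {F : Set (G → A)} (hF : MeasurableSet F) (hFh₀ : DependsOn (· ∈ F) {h₀}ᶜ) :
    ν ({x | x h₁ = x h₀} ∩ F) ≤ c * ν F :=
  calc ν ({x | x h₁ = x h₀} ∩ F)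
      = ∫⁻ η, kernelMeasure φ D {h₀} η ({x | x h₁ = x h₀} ∩ F) ∂ν :=
        hν.measure_eq_lintegral hφ {h₀} ((measurableSet_apply_eq_apply h₁ h₀).inter hF)
    _ ≤ ∫⁻ η, F.indicator (fun _ => c) η ∂ν :=
        lintegral_mono (kernelMeasure_singleton_inter_le φ D h₁₀ hc hF hFh₀)
    _ = c * ν F := lintegral_indicator_const hF c

theorem IsGibbs.measure_biInter_le {φ : (G → A) → ℝ} {D : Finset G} {ν : Measure (G → A)}
    (hν : IsGibbs φ D ν) (hφ : Measurable φ) {c : ℝ≥0∞}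
    (hc : ∀ (h₀ : G) (η : G → A) (τ : ({h₀} : Finset G) → A),
      ENNReal.ofReal (weight φ D {h₀} η τ) ≤ c)
    {g : G} {s : Finset G} (hs : ∀ h ∈ s, ∀ h' ∈ s, h * g ≠ h') :
    ν (⋂ h ∈ s, {x | shift g x h = x h}) ≤ c ^ #s * ν Set.univ := by
  induction s using Finset.induction_on with
  | empty => simp
  | @insert h₀ s hh₀ ih =>
    have hs' : ∀ h ∈ s, ∀ h' ∈ s, h * g ≠ h' := fun h hh h' hh' =>
      hs h (mem_insert_of_mem hh) h' (mem_insert_of_mem hh')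
    have hF : MeasurableSet (⋂ h ∈ s, {x : G → A | shift g x h = x h}) :=
      s.measurableSet_biInter fun h _ => measurableSet_apply_eq_apply (h * g) h
    have hFh₀ : DependsOn (· ∈ ⋂ h ∈ s, {x : G → A | shift g x h = x h}) {h₀}ᶜ := by
      intro x y hxy
      have hagree : ∀ h ∈ s, x (h * g) = y (h * g) ∧ x h = y h := fun h hh =>
        ⟨hxy _ (hs h (mem_insert_of_mem hh) h₀ (mem_insert_self h₀ s)),
          hxy _ (ne_of_mem_of_not_mem hh hh₀)⟩
      simp only [Set.mem_iInter, Set.mem_ofPred_eq, shift]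
      exact propext <| forall₂_congr fun h hh => by rw [(hagree h hh).1, (hagree h hh).2]
    rw [set_biInter_insert, card_insert_of_notMem hh₀, pow_succ', mul_assoc]
    calc ν ({x | shift g x h₀ = x h₀} ∩ ⋂ h ∈ s, {x | shift g x h = x h})
        ≤ c * ν (⋂ h ∈ s, {x | shift g x h = x h}) :=
          hν.measure_inter_le hφ (hs h₀ (mem_insert_self h₀ s) h₀ (mem_insert_self h₀ s))
            (hc h₀) hF hFh₀
      _ ≤ c * (c ^ #s * ν Set.univ) := by gcongr; exact ih hs'

end ShiftGibbs

namespace ShiftGibbs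

variable {G : Type*} [Group G] {A : Type*} [Fintype A] [Nonempty A]
  [MeasurableSpace A] [MeasurableSingletonClass A]

theorem stmt18_general [Infinite G] (hA : 1 < Fintype.card A)
    (φ : (G → A) → ℝ) (D : Finset G)
    (hφ : ∀ x y : G → A, (∀ d ∈ D, x d = y d) → φ x = φ y)
    (ν : Measure (G → A)) [IsProbabilityMeasure ν]
    (hGibbs : IsGibbs φ D ν) :
    ∀ g : G, g ≠ 1 → ν {x : G → A | shift g x = x} = 0 := by
  intro g hg
  have hφD : DependsOn φ (D : Set G) := fun x y h => hφ x y h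
  obtain ⟨c, hc1, hc⟩ := exists_weight_singleton_le hA hφD
  have hle : ∀ n : ℕ, ν {x | shift g x = x} ≤ c ^ n := fun n => by
    obtain ⟨s, rfl, hs⟩ := exists_finset_card_eq_forall_mul_ne hg n
    calc ν {x | shift g x = x} ≤ ν (⋂ h ∈ s, {x | shift g x h = x h}) :=
          measure_mono fun x hx => Set.mem_iInter₂.2 fun h _ => congrFun hx h
      _ ≤ c ^ s.card * ν Set.univ :=
          hGibbs.measure_biInter_le (hφD.measurable D.finite_toSet) hc hs
      _ = c ^ s.card := by rw [measure_univ, mul_one]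
  exact le_antisymm (ge_of_tendsto' (ENNReal.tendsto_pow_atTop_nhds_zero_of_lt_one hc1) hle)
    bot_le

/-- A shift-invariant Gibbs measure over a countably infinite group `G` (for a potential
`φ` depending on the coordinates in a finite window `D`, over an alphabet with at least two
letters) gives an essentially free shift action: for every `g ≠ e`, the set of fixed points
of `g` is `ν`-null. -/
theorem stmt18 [Countable G] [Infinite G] (hA : 1 < Fintype.card A)
    (φ : (G → A) → ℝ) (D : Finset G)
    (hφ : ∀ x y : G → A, (∀ d ∈ D, x d = y d) → φ x = φ y)
    (ν : Measure (G → A)) [IsProbabilityMeasure ν]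
    (hGibbs : IsGibbs φ D ν) (hinv : ∀ g : G, ν.map (shift g) = ν) :
    ∀ g : G, g ≠ 1 → ν {x : G → A | shift g x = x} = 0 :=
  stmt18_general hA φ D hφ ν hGibbs

end ShiftGibbs
end
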